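/- arXiv:1711.10776 — 6 statements merged into one kernel-verified Lean document; each statement's English description precedes it below -/
import Mathlib

section
/- For all constants a ≥ 0, b ≥ 0, c ≥ 0, the function f(x) = (e^{a·x} − 1)·(e^{b·x} − 1)·e^{c·x} is convex on the interval [0, ∞). -/
open Real Set

/-! The factors `x ↦ e^{a x} - 1`, `x ↦ e^{b x} - 1`, `x ↦ e^{c x}` are convex, nonnegative and
nondecreasing on `[0, ∞)`. Two nonnegative convex functions that vary in the same direction have a
convex product, and the product is again nonnegative and nondecreasing, so this applies twice. -/

lemma convexOn_exp_mul (a : ℝ) : ConvexOn ℝ univ fun x => exp (a * x) :=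
  convexOn_exp.comp_linearMap (LinearMap.mulLeft ℝ a)

lemma convexOn_exp_mul_sub_one (a : ℝ) : ConvexOn ℝ univ fun x => exp (a * x) - 1 := by
  simpa only [Pi.add_def, sub_eq_add_neg] using (convexOn_exp_mul a).add_const (-1)

lemma monotone_exp_mul {a : ℝ} (ha : 0 ≤ a) : Monotone fun x => exp (a * x) :=
  fun _ _ hxy => exp_le_exp.2 (mul_le_mul_of_nonneg_left hxy ha)

lemma monotone_exp_mul_sub_one {a : ℝ} (ha : 0 ≤ a) : Monotone fun x => exp (a * x) - 1 :=
  fun _ _ hxy => sub_le_sub_right (monotone_exp_mul ha hxy) 1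

lemma exp_mul_sub_one_nonneg {a x : ℝ} (ha : 0 ≤ a) (hx : 0 ≤ x) : 0 ≤ exp (a * x) - 1 :=
  sub_nonneg.2 (one_le_exp (mul_nonneg ha hx))

/-- For all constants `a ≥ 0`, `b ≥ 0`, `c ≥ 0`, the function
`f(x) = (e^{a·x} − 1)·(e^{b·x} − 1)·e^{c·x}` is convex on `[0, ∞)`. -/
theorem stmt_0 (a b c : ℝ) (ha : 0 ≤ a) (hb : 0 ≤ b) (hc : 0 ≤ c) :
    ConvexOn ℝ (Set.Ici (0 : ℝ))
      (fun x : ℝ => (Real.exp (a * x) - 1) * (Real.exp (b * x) - 1) * Real.exp (c * x)) := by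
  have hA := (convexOn_exp_mul_sub_one a).subset (subset_univ _) (convex_Ici 0)
  have hB := (convexOn_exp_mul_sub_one b).subset (subset_univ _) (convex_Ici 0)
  have hC := (convexOn_exp_mul c).subset (subset_univ _) (convex_Ici 0)
  have hA₀ : ∀ x ∈ Ici (0 : ℝ), 0 ≤ exp (a * x) - 1 := fun _ hx => exp_mul_sub_one_nonneg ha hx
  have hB₀ : ∀ x ∈ Ici (0 : ℝ), 0 ≤ exp (b * x) - 1 := fun _ hx => exp_mul_sub_one_nonneg hb hx
  have hA_mono := (monotone_exp_mul_sub_one ha).monotoneOn (Ici 0)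
  have hB_mono := (monotone_exp_mul_sub_one hb).monotoneOn (Ici 0)
  have hAB := hA.mul hB hA₀ hB₀ (hA_mono.monovaryOn hB_mono)
  have hAB_mono := hA_mono.mul hB_mono hA₀ hB₀
  exact hAB.mul hC (fun x hx => mul_nonneg (hA₀ x hx) (hB₀ x hx)) (fun _ _ => (exp_pos _).le)
    (hAB_mono.monovaryOn ((monotone_exp_mul hc).monotoneOn _))
end

section
/- If the circuit power satisfies P^C = 0, then the NOMA per-device energy function E(t) is strictly decreasing on (0, ∞). -/
/-!
With `g t = t (e^{a_j/t} - 1)` we have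
`E(t) = σ²/(η h²) · g t · (1 + Σ_l (e^{a_l/t} - 1) e^{b_{jl}/t})` when `P^C = 0`.
Since `g t = a_j · φ(a_j/t)`, where `φ u = (e^u - 1)/u` is the slope of the secant of the convex
function `exp` from `0` to `u`, `g` is positive and strictly decreasing, while the bracket is
positive and weakly decreasing because `a_l > 0` and `b_{jl} ≥ 0`.
-/

open Real Set

lemma StrictAntiOn.mul_antitoneOn {α β : Type*} [Preorder α] [Mul β] [Zero β] [Preorder β]
    [PosMulMono β] [MulPosStrictMono β] {f g : α → β} {s : Set α}
    (hf : StrictAntiOn f s) (hg : AntitoneOn g s)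
    (hf₀ : ∀ x ∈ s, 0 ≤ f x) (hg₀ : ∀ x ∈ s, 0 < g x) : StrictAntiOn (f * g) s :=
  fun x hx y hy hxy ↦ calc
    f y * g y ≤ f y * g x := mul_le_mul_of_nonneg_left (hg hx hy hxy.le) (hf₀ y hy)
    _ < f x * g x := mul_lt_mul_of_pos_right (hf hx hy hxy) (hg₀ x hx)

lemma strictMonoOn_exp_sub_one_div : StrictMonoOn (fun u : ℝ ↦ (exp u - 1) / u) (Ioi 0) :=
  fun u hu v hv huv ↦ by
    simpa using strictConvexOn_exp.secant_strict_mono (a := 0) trivial trivial trivial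
      (ne_of_gt hu) (ne_of_gt hv) huv

lemma strictAntiOn_mul_exp_div_sub_one {a : ℝ} (ha : 0 < a) :
    StrictAntiOn (fun t : ℝ ↦ t * (exp (a / t) - 1)) (Ioi 0) := fun x hx y hy hxy ↦ by
  have hslope := strictMonoOn_exp_sub_one_div (div_pos ha hy) (div_pos ha hx)
    (div_lt_div_of_pos_left ha hx hxy)
  simp only [div_div_eq_mul_div, div_lt_div_iff_of_pos_right ha] at hslope
  linarith

lemma exp_div_sub_one_pos {a t : ℝ} (ha : 0 < a) (ht : 0 < t) : 0 < exp (a / t) - 1 :=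
  sub_pos.2 (one_lt_exp_iff.2 (div_pos ha ht))

lemma exp_div_le_exp_div {b x y : ℝ} (hb : 0 ≤ b) (hx : 0 < x) (hxy : x ≤ y) :
    exp (b / y) ≤ exp (b / x) := by
  gcongr

lemma antitoneOn_one_add_sum_exp_div {ι : Type*} (s : Finset ι) {a b : ι → ℝ}
    (ha : ∀ l ∈ s, 0 < a l) (hb : ∀ l ∈ s, 0 ≤ b l) :
    AntitoneOn (fun t : ℝ ↦ 1 + ∑ l ∈ s, (exp (a l / t) - 1) * exp (b l / t)) (Ioi 0) :=
  fun _ hx _ _ hxy ↦ add_le_add_right (Finset.sum_le_sum fun l hl ↦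
    mul_le_mul (sub_le_sub_right (exp_div_le_exp_div (ha l hl).le hx hxy) 1)
      (exp_div_le_exp_div (hb l hl) hx hxy) (exp_pos _).le
      (exp_div_sub_one_pos (ha l hl) hx).le) 1

lemma one_add_sum_exp_div_pos {ι : Type*} (s : Finset ι) {a b : ι → ℝ}
    (ha : ∀ l ∈ s, 0 < a l) {t : ℝ} (ht : 0 < t) :
    0 < 1 + ∑ l ∈ s, (exp (a l / t) - 1) * exp (b l / t) :=
  add_pos_of_pos_of_nonneg one_pos <| Finset.sum_nonneg fun l hl ↦
    mul_nonneg (exp_div_sub_one_pos (ha l hl) ht).le (exp_pos _).le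

theorem stmt_4_general (j J : ℕ) (hjJ : j ≤ J)
    (D : ℕ → ℝ) (hD : ∀ l, j ≤ l → l ≤ J → 0 < D l)
    (B σ2 h η PC : ℝ) (hB : 0 < B) (hσ2 : 0 < σ2) (hh : 0 < h)
    (hη0 : 0 < η) (hPC : PC = 0)
    (a : ℕ → ℝ) (ha : ∀ l, a l = Real.log 2 * D l / B)
    (b : ℕ → ℝ) (hb : ∀ l, b l = Real.log 2 * (∑ s ∈ Finset.Ico (j + 1) l, D s) / B)
    (E : ℝ → ℝ)
    (hE : ∀ t : ℝ, E t =
      σ2 * t / (η * h ^ 2) *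
        ((∑ l ∈ Finset.Icc (j + 1) J,
            (Real.exp (a l / t) - 1) * (Real.exp (a j / t) - 1) * Real.exp (b l / t))
          + (Real.exp (a j / t) - 1)) + t * PC) :
    StrictAntiOn E (Set.Ioi (0 : ℝ)) := by
  have hlog2 : 0 < log 2 := log_pos one_lt_two
  have ha_pos : ∀ l, j ≤ l → l ≤ J → 0 < a l := fun l hjl hlJ ↦ by
    rw [ha l]; exact div_pos (mul_pos hlog2 (hD l hjl hlJ)) hB
  have haj : 0 < a j := ha_pos j le_rfl hjJ
  have hal : ∀ l ∈ Finset.Icc (j + 1) J, 0 < a l := fun l hl ↦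
    ha_pos l (Nat.le_of_succ_le (Finset.mem_Icc.1 hl).1) (Finset.mem_Icc.1 hl).2
  have hbl : ∀ l ∈ Finset.Icc (j + 1) J, 0 ≤ b l := fun l hl ↦ by
    rw [hb l]
    refine div_nonneg (mul_nonneg hlog2.le (Finset.sum_nonneg fun s hs ↦ (hD s ?_ ?_).le)) hB.le
    all_goals simp only [Finset.mem_Ico, Finset.mem_Icc] at hs hl; omega
  have hc : 0 < σ2 / (η * h ^ 2) := by positivity
  have hprod := (strictAntiOn_mul_exp_div_sub_one haj).mul_antitoneOn
    (antitoneOn_one_add_sum_exp_div _ hal hbl)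
    (fun t ht ↦ (mul_pos ht (exp_div_sub_one_pos haj ht)).le)
    (fun t ht ↦ one_add_sum_exp_div_pos _ hal ht)
  refine ((strictMono_mul_left_of_pos hc).comp_strictAntiOn hprod).congr fun t _ ↦ ?_
  simp only [Function.comp_apply, Pi.mul_apply, hE t, hPC, mul_zero, add_zero, mul_add,
    Finset.mul_sum]
  rw [add_comm]
  congr 1
  · exact Finset.sum_congr rfl fun l _ ↦ by ring
  · ring

/-- NOMA per-device energy function: statement 4 of the paper. -/
theorem stmt_4 (j J : ℕ) (hjJ : j ≤ J)
    (D : ℕ → ℝ) (hD : ∀ l, j ≤ l → l ≤ J → 0 < D l)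
    (B σ2 h η PC : ℝ) (hB : 0 < B) (hσ2 : 0 < σ2) (hh : 0 < h)
    (hη0 : 0 < η) (hη1 : η ≤ 1) (hPC : PC = 0)
    (a : ℕ → ℝ) (ha : ∀ l, a l = Real.log 2 * D l / B)
    (b : ℕ → ℝ) (hb : ∀ l, b l = Real.log 2 * (∑ s ∈ Finset.Ico (j + 1) l, D s) / B)
    (E : ℝ → ℝ)
    (hE : ∀ t : ℝ, E t =
      σ2 * t / (η * h ^ 2) *
        ((∑ l ∈ Finset.Icc (j + 1) J,
            (Real.exp (a l / t) - 1) * (Real.exp (a j / t) - 1) * Real.exp (b l / t))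
          + (Real.exp (a j / t) - 1)) + t * PC) :
    StrictAntiOn E (Set.Ioi (0 : ℝ)) :=
  stmt_4_general j J hjJ D hD B σ2 h η PC hB hσ2 hh hη0 hPC a ha b hb E hE
end

section
/- The NOMA per-device energy function E is differentiable on (0, ∞) and its derivative E′(t) converges to P^C as t → +∞. -/
open Filter Topology

/-!
Substituting `x = 1/t` writes `E t = t * G (1/t)` with `G` smooth and `G 0 = P^C`, each bracket
`e^{a x} - 1` vanishing at `x = 0`. For such a perspective function
`(t * G t⁻¹)' = G t⁻¹ - G' t⁻¹ / t`, which tends to `G 0` as `t → ∞`.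
-/

theorem hasDerivAt_mul_comp_inv {g : ℝ → ℝ} {t : ℝ} (ht : t ≠ 0)
    (hg : DifferentiableAt ℝ g t⁻¹) :
    HasDerivAt (fun t => t * g t⁻¹) (g t⁻¹ - deriv g t⁻¹ * t⁻¹) t := by
  have hcomp : HasDerivAt (fun t => g t⁻¹) (deriv g t⁻¹ * -(t ^ 2)⁻¹) t :=
    hg.hasDerivAt.comp t (hasDerivAt_inv ht)
  refine ((hasDerivAt_id' t).fun_mul hcomp).congr_deriv ?_
  field_simp
  ring

theorem tendsto_deriv_mul_comp_inv_atTop {g : ℝ → ℝ} (hg : ContDiff ℝ 1 g) :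
    Tendsto (deriv fun t => t * g t⁻¹) atTop (𝓝 (g 0)) := by
  have hinv : Tendsto (fun t : ℝ => t⁻¹) atTop (𝓝 0) := tendsto_inv_atTop_zero
  have hvalue : Tendsto (fun t : ℝ => g t⁻¹) atTop (𝓝 (g 0)) :=
    (hg.continuous.tendsto 0).comp hinv
  have hslope : Tendsto (fun t : ℝ => deriv g t⁻¹ * t⁻¹) atTop (𝓝 (deriv g 0 * 0)) :=
    (((hg.continuous_deriv le_rfl).tendsto 0).comp hinv).mul hinv
  rw [mul_zero] at hslope
  have hlim := hvalue.sub hslope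
  rw [sub_zero] at hlim
  refine hlim.congr' ?_
  filter_upwards [eventually_gt_atTop 0] with t ht
  exact ((hasDerivAt_mul_comp_inv ht.ne' ((hg.differentiable one_ne_zero) _)).deriv).symm

theorem stmt_6_general (j J : ℕ)
    (σ2 h η PC : ℝ)
    (a : ℕ → ℝ)
    (b : ℕ → ℝ)
    (E : ℝ → ℝ)
    (hE : ∀ t : ℝ, E t =
      σ2 * t / (η * h ^ 2) *
        ((∑ l ∈ Finset.Icc (j + 1) J,
            (Real.exp (a l / t) - 1) * (Real.exp (a j / t) - 1) * Real.exp (b l / t))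
          + (Real.exp (a j / t) - 1)) + t * PC) :
    (∀ t ∈ Set.Ioi (0 : ℝ), DifferentiableAt ℝ E t) ∧
      Tendsto (deriv E) atTop (nhds PC) := by
  set G : ℝ → ℝ := fun x => σ2 / (η * h ^ 2) * ((∑ l ∈ Finset.Icc (j + 1) J,
      (Real.exp (a l * x) - 1) * (Real.exp (a j * x) - 1) * Real.exp (b l * x))
    + (Real.exp (a j * x) - 1)) + PC with hG
  have hGsmooth : ContDiff ℝ 1 G := by fun_prop
  have hG0 : G 0 = PC := by simp [hG]
  have hEG : E = fun t => t * G t⁻¹ := by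
    funext t
    rw [hE, hG]
    simp only [div_eq_mul_inv]
    ring
  subst hEG
  refine ⟨fun t ht => ?_, hG0 ▸ tendsto_deriv_mul_comp_inv_atTop hGsmooth⟩
  exact (hasDerivAt_mul_comp_inv (Set.mem_Ioi.mp ht).ne'
    ((hGsmooth.differentiable one_ne_zero) _)).differentiableAt

/-- NOMA per-device energy function: statement 6 of the paper. -/
theorem stmt_6 (j J : ℕ) (hjJ : j ≤ J)
    (D : ℕ → ℝ) (hD : ∀ l, j ≤ l → l ≤ J → 0 < D l)
    (B σ2 h η PC : ℝ) (hB : 0 < B) (hσ2 : 0 < σ2) (hh : 0 < h)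
    (hη0 : 0 < η) (hη1 : η ≤ 1) (hPC : 0 ≤ PC)
    (a : ℕ → ℝ) (ha : ∀ l, a l = Real.log 2 * D l / B)
    (b : ℕ → ℝ) (hb : ∀ l, b l = Real.log 2 * (∑ s ∈ Finset.Ico (j + 1) l, D s) / B)
    (E : ℝ → ℝ)
    (hE : ∀ t : ℝ, E t =
      σ2 * t / (η * h ^ 2) *
        ((∑ l ∈ Finset.Icc (j + 1) J,
            (Real.exp (a l / t) - 1) * (Real.exp (a j / t) - 1) * Real.exp (b l / t))
          + (Real.exp (a j / t) - 1)) + t * PC) :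
    (∀ t ∈ Set.Ioi (0 : ℝ), DifferentiableAt ℝ E t) ∧
      Tendsto (deriv E) atTop (nhds PC) :=
  stmt_6_general j J σ2 h η PC a b E hE
end

section
/- For each j ∈ {1, …, n}, the NOMA power p_j(t) is nonnegative for all t > 0, and p_j is strictly decreasing in t on (0, ∞). -/
/-!
Every summand of the bracket is a product of factors `exp (c / t) - 1` and `exp (d / t)` with
`c, d ≥ 0`; each factor is nonnegative and antitone in `t > 0`, hence so is the product. The last
term `exp (a_j / t) - 1` is strictly decreasing because `a_j > 0`, and the prefactor `σ² / g_j` is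
positive.
-/

open Real Finset

lemma exp_div_sub_one_nonneg {c t : ℝ} (hc : 0 ≤ c) (ht : 0 < t) : 0 ≤ exp (c / t) - 1 :=
  sub_nonneg.2 (one_le_exp (div_nonneg hc ht.le))

section Bracket

variable {ι : Type*} (S : Finset ι) (c d : ι → ℝ) (c₀ : ℝ)

/-- With `S = {j+1, …, n}`, `c₀ = a_j`, `c l = a_l` and `d l = b_{jl}` this is `p_j · g_j / σ²`. -/
noncomputable def nomaBracket (t : ℝ) : ℝ :=
  (∑ l ∈ S, (exp (c l / t) - 1) * (exp (c₀ / t) - 1) * exp (d l / t)) + (exp (c₀ / t) - 1)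

variable {S c d c₀}

lemma nomaBracket_nonneg (hc : ∀ l ∈ S, 0 ≤ c l) (hc₀ : 0 ≤ c₀) {t : ℝ} (ht : 0 < t) :
    0 ≤ nomaBracket S c d c₀ t := by
  have h₀ := exp_div_sub_one_nonneg hc₀ ht
  refine add_nonneg (sum_nonneg fun l hl => ?_) h₀
  have := exp_div_sub_one_nonneg (hc l hl) ht
  positivity

lemma strictAntiOn_nomaBracket (hc : ∀ l ∈ S, 0 ≤ c l) (hd : ∀ l ∈ S, 0 ≤ d l) (hc₀ : 0 < c₀) :
    StrictAntiOn (nomaBracket S c d c₀) (Set.Ioi 0) := by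
  intro s (hs : 0 < s) t (ht : 0 < t) hst
  have h₀ : exp (c₀ / t) < exp (c₀ / s) := exp_lt_exp.2 (div_lt_div_of_pos_left hc₀ hs hst)
  refine add_lt_add_of_le_of_lt (sum_le_sum fun l hl => ?_) (by linarith)
  have := hc l hl
  have := hd l hl
  have := exp_div_sub_one_nonneg (hc l hl) hs
  have := exp_div_sub_one_nonneg hc₀.le hs
  have := exp_div_sub_one_nonneg hc₀.le ht
  gcongr

end Bracket

/-- For each `j ∈ {1, …, n}`, the closed-form NOMA power `p j t` is nonnegative for all
`t > 0` and strictly decreasing in `t` on `(0, ∞)`. -/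
theorem stmt_9 (n : ℕ)
    (g : ℕ → ℝ) (hg : ∀ l, 1 ≤ l → l ≤ n → 0 < g l)
    (D : ℕ → ℝ) (hD : ∀ l, 1 ≤ l → l ≤ n → 0 < D l)
    (B σ2 : ℝ) (hB : 0 < B) (hσ2 : 0 < σ2)
    (a : ℕ → ℝ) (ha : ∀ l, a l = Real.log 2 * D l / B)
    (b : ℕ → ℕ → ℝ)
    (hb : ∀ j l, b j l = Real.log 2 * (∑ s ∈ Finset.Ico (j + 1) l, D s) / B)
    (p : ℕ → ℝ → ℝ)
    (hp : ∀ j, ∀ t : ℝ, p j t =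
      σ2 / g j *
        ((∑ l ∈ Finset.Icc (j + 1) n,
            (Real.exp (a l / t) - 1) * (Real.exp (a j / t) - 1) * Real.exp (b j l / t))
          + (Real.exp (a j / t) - 1))) :
    ∀ j, 1 ≤ j → j ≤ n →
      (∀ t : ℝ, 0 < t → 0 ≤ p j t) ∧ StrictAntiOn (p j) (Set.Ioi (0 : ℝ)) := by
  intro j hj1 hjn
  have ha_pos : ∀ l, 1 ≤ l → l ≤ n → 0 < a l := fun l hl1 hln => by
    have := hD l hl1 hln
    rw [ha]
    positivity
  have haj := ha_pos j hj1 hjn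
  have ha_nonneg : ∀ l ∈ Icc (j + 1) n, 0 ≤ a l := fun l hl =>
    (ha_pos l (by grind) (by grind)).le
  have hb_nonneg : ∀ l ∈ Icc (j + 1) n, 0 ≤ b j l := fun l hl => by
    have : 0 ≤ ∑ s ∈ Ico (j + 1) l, D s := sum_nonneg fun s hs =>
      (hD s (by grind) (by grind)).le
    rw [hb]
    positivity
  have hcoef : 0 < σ2 / g j := div_pos hσ2 (hg j hj1 hjn)
  have hpj : p j = fun t => σ2 / g j * nomaBracket (Icc (j + 1) n) a (b j) (a j) t :=
    funext (hp j)
  rw [hpj]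
  exact ⟨fun t ht => mul_nonneg hcoef.le (nomaBracket_nonneg ha_nonneg haj.le ht),
    fun s hs t ht hst => mul_lt_mul_of_pos_left
      (strictAntiOn_nomaBracket ha_nonneg hb_nonneg haj hs ht hst) hcoef⟩
end

section
/- For each j ∈ {1, …, n}, the NOMA powers p_1(t), …, p_n(t) given by the closed form satisfy the throughput equations B·t·log₂( 1 + g_j·p_j(t) / ( Σ_{l=j+1}^{n} g_l·p_l(t) + σ² ) ) = D_j, i.e., each device achieves exactly its minimal required payload. -/
/-!
Write `x_s = e^{a_s/t}`, so that `e^{b_{jl}/t} = ∏_{j<s<l} x_s`. The identity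
`∏_{s ∈ I} x_s = 1 + ∑_{l ∈ I} (x_l - 1) ∏_{s ∈ I, s < l} x_s` collapses the closed form to
`g_j p_j = σ² (x_j - 1) ∏_{s>j} x_s`, and its mirror image (products over `s > l`) sums these
received powers to the interference `∑_{l>j} g_l p_l = σ² (∏_{s>j} x_s - 1)`. Hence the SINR
of device `j` is `x_j - 1`, and its rate is `B t log₂ x_j = B a_j / ln 2 = D_j`.
-/

open Finset Real

namespace Finset

variable {ι R : Type*} [LinearOrder ι] [LocallyFiniteOrder ι] [CommRing R]

theorem Icc_filter_lt_of_mem {m n l : ι} (hl : l ∈ Icc m n) :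
    {s ∈ Icc m n | s < l} = Ico m l := by
  ext s
  simp only [mem_filter, mem_Icc, mem_Ico] at hl ⊢
  exact ⟨fun h => ⟨h.1.1, h.2⟩, fun h => ⟨⟨h.1, h.2.le.trans hl.2⟩, h.2⟩⟩

theorem Icc_filter_gt_of_mem {m n l : ι} (hl : l ∈ Icc m n) :
    {s ∈ Icc m n | l < s} = Ioc l n := by
  ext s
  simp only [mem_filter, mem_Icc, mem_Ioc] at hl ⊢
  exact ⟨fun h => ⟨h.2, h.1.2⟩, fun h => ⟨⟨hl.1.trans h.1.le, h.2⟩, h.1⟩⟩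

theorem prod_Icc_eq_one_add_sum_prod_Ico (x : ι → R) (m n : ι) :
    ∏ s ∈ Icc m n, x s = 1 + ∑ l ∈ Icc m n, (x l - 1) * ∏ s ∈ Ico m l, x s := by
  have h := prod_one_add_ordered (Icc m n) (x · - 1)
  simp only [add_sub_cancel] at h
  rwa [sum_congr rfl fun l hl => by rw [Icc_filter_lt_of_mem hl]] at h

theorem prod_Icc_eq_one_add_sum_prod_Ioc (x : ι → R) (m n : ι) :
    ∏ s ∈ Icc m n, x s = 1 + ∑ l ∈ Icc m n, (x l - 1) * ∏ s ∈ Ioc l n, x s := by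
  have h := prod_sub_ordered (Icc m n) x (x · - 1)
  simp only [sub_sub_cancel, prod_const_one, mul_one] at h
  rw [sum_congr rfl fun l hl => by rw [Icc_filter_gt_of_mem hl]] at h
  linear_combination -h

end Finset

theorem stmt_10_general (n : ℕ)
    (g : ℕ → ℝ) (hg : ∀ l, 1 ≤ l → l ≤ n → 0 < g l)
    (D : ℕ → ℝ)
    (B σ2 t : ℝ) (hB : 0 < B) (hσ2 : 0 < σ2) (ht : 0 < t)
    (a : ℕ → ℝ) (ha : ∀ l, a l = Real.log 2 * D l / B)
    (b : ℕ → ℕ → ℝ)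
    (hb : ∀ j l, b j l = Real.log 2 * (∑ s ∈ Finset.Ico (j + 1) l, D s) / B)
    (p : ℕ → ℝ)
    (hp : ∀ j, p j =
      σ2 / g j *
        ((∑ l ∈ Finset.Icc (j + 1) n,
            (Real.exp (a l / t) - 1) * (Real.exp (a j / t) - 1) * Real.exp (b j l / t))
          + (Real.exp (a j / t) - 1))) :
    ∀ j, 1 ≤ j → j ≤ n →
      B * t * Real.logb 2
        (1 + g j * p j / ((∑ l ∈ Finset.Icc (j + 1) n, g l * p l) + σ2)) = D j := by
  have hexp_b (j l : ℕ) : exp (b j l / t) = ∏ s ∈ Ico (j + 1) l, exp (a s / t) := by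
    rw [← exp_sum, hb, mul_sum, sum_div, sum_div]
    exact congrArg exp (sum_congr rfl fun s _ => by rw [ha])
  obtain ⟨x, hx⟩ : ∃ x : ℕ → ℝ, ∀ s, exp (a s / t) = x s := ⟨_, fun _ => rfl⟩
  simp only [hexp_b, hx] at hp
  have hreceived (l : ℕ) (hl : 1 ≤ l) (hln : l ≤ n) :
      g l * p l = σ2 * ((x l - 1) * ∏ s ∈ Ioc l n, x s) := by
    rw [hp, ← mul_assoc, mul_div_cancel₀ _ (hg l hl hln).ne', ← Icc_add_one_left_eq_Ioc,
      prod_Icc_eq_one_add_sum_prod_Ico x, mul_add (x l - 1), mul_one, mul_sum, add_comm (x l - 1)]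
    congr 2
    exact sum_congr rfl fun _ _ => by ring
  intro j hj hjn
  have hinterference : ∑ l ∈ Icc (j + 1) n, g l * p l = σ2 * (∏ s ∈ Ioc j n, x s - 1) := by
    rw [← Icc_add_one_left_eq_Ioc, prod_Icc_eq_one_add_sum_prod_Ioc x, add_sub_cancel_left,
      mul_sum]
    exact sum_congr rfl fun l hl => hreceived l (by grind) (mem_Icc.mp hl).2
  have hsinr : 1 + g j * p j / (∑ l ∈ Icc (j + 1) n, g l * p l + σ2) = x j := by
    have hprod : ∏ s ∈ Ioc j n, x s ≠ 0 := prod_ne_zero_iff.mpr fun s _ => hx s ▸ (exp_pos _).ne'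
    rw [hinterference, hreceived j hj hjn, mul_sub_one, sub_add_cancel]
    field_simp
    ring
  rw [hsinr, ← hx, Real.logb, Real.log_exp, ha]
  field_simp

/-- The closed-form NOMA powers satisfy the throughput equations
`B·t·log₂(1 + g_j·p_j(t)/(Σ_{l>j} g_l·p_l(t) + σ²)) = D_j` for every `j ∈ {1, …, n}`,
i.e., each device achieves exactly its minimal required payload. -/
theorem stmt_10 (n : ℕ)
    (g : ℕ → ℝ) (hg : ∀ l, 1 ≤ l → l ≤ n → 0 < g l)
    (D : ℕ → ℝ) (hD : ∀ l, 1 ≤ l → l ≤ n → 0 < D l)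
    (B σ2 t : ℝ) (hB : 0 < B) (hσ2 : 0 < σ2) (ht : 0 < t)
    (a : ℕ → ℝ) (ha : ∀ l, a l = Real.log 2 * D l / B)
    (b : ℕ → ℕ → ℝ)
    (hb : ∀ j l, b j l = Real.log 2 * (∑ s ∈ Finset.Ico (j + 1) l, D s) / B)
    (p : ℕ → ℝ)
    (hp : ∀ j, p j =
      σ2 / g j *
        ((∑ l ∈ Finset.Icc (j + 1) n,
            (Real.exp (a l / t) - 1) * (Real.exp (a j / t) - 1) * Real.exp (b j l / t))
          + (Real.exp (a j / t) - 1))) :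
    ∀ j, 1 ≤ j → j ≤ n →
      B * t * Real.logb 2
        (1 + g j * p j / ((∑ l ∈ Finset.Icc (j + 1) n, g l * p l) + σ2)) = D j :=
  stmt_10_general n g hg D B σ2 t hB hσ2 ht a ha b hb p hp
end

section
/- The TDMA per-device energy function E(t) = (t/(g·η))·(2^{D/(B·t)} − 1) + t·P^C is convex on (0, ∞). If P^C = 0, E is strictly decreasing on (0, ∞). If P^C > 0, there exists a unique T* > 0 at which the derivative of E vanishes, and E is strictly decreasing on (0, T*) and strictly increasing on (T*, ∞). -/
/-!
Writing `2 ^ (D / (B t)) = exp (K / t)` with `K = D log 2 / B`, the energy is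
`E(t) = c t (exp (K / t) - 1) + t P` with `c = 1 / (g η)`, and its derivative is
`E'(t) = c (h (K / t) - 1) + P` where `h u = exp u (1 - u)`. Since `h' u = -u exp u`, `h` decreases
strictly from `h 0 = 1` to `-∞` on `[0, ∞)`; hence `E'` is strictly increasing (so `E` is convex),
`E' < 0` when `P = 0`, and for `P > 0` the equation `h u = 1 - P / c` has a root `u > 0`, giving the
unique critical point `T = K / u`.
-/

open Real Set

lemma strictAntiOn_exp_mul_one_sub : StrictAntiOn (fun u : ℝ => exp u * (1 - u)) (Ici 0) := by
  refine strictAntiOn_of_deriv_neg (convex_Ici 0) (by fun_prop) fun u hu => ?_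
  rw [interior_Ici, mem_Ioi] at hu
  have hd : HasDerivAt (fun u : ℝ => exp u * (1 - u)) (exp u * (1 - u) + exp u * (0 - 1)) u :=
    (hasDerivAt_exp u).mul ((hasDerivAt_const u 1).sub (hasDerivAt_id u))
  rw [hd.deriv]
  nlinarith [mul_pos hu (exp_pos u)]

lemma exp_mul_one_sub_lt_one {u : ℝ} (hu : 0 < u) : exp u * (1 - u) < 1 := by
  simpa using strictAntiOn_exp_mul_one_sub self_mem_Ici hu.le hu

lemma exists_pos_exp_mul_one_sub_eq {y : ℝ} (hy : y < 1) : ∃ u, 0 < u ∧ exp u * (1 - u) = y := by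
  have h_end : exp (2 - y) * (1 - (2 - y)) ≤ y := by
    nlinarith [one_le_exp (by linarith : (0 : ℝ) ≤ 2 - y)]
  obtain ⟨u, hu, hu_eq⟩ := intermediate_value_Icc' (by linarith : (0 : ℝ) ≤ 2 - y)
    (by fun_prop : Continuous fun u : ℝ => exp u * (1 - u)).continuousOn
    ⟨h_end, by simp [hy.le]⟩
  refine ⟨u, hu.1.lt_of_ne ?_, hu_eq⟩
  rintro rfl
  exact hy.ne' (by simpa using hu_eq)

section Calculus

variable {f : ℝ → ℝ} {a T : ℝ}

lemma strictAntiOn_Ioo_of_strictMonoOn_deriv (hf : DifferentiableOn ℝ f (Ioi a))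
    (hf' : StrictMonoOn (deriv f) (Ioi a)) (hT : a < T) (hT0 : deriv f T = 0) :
    StrictAntiOn f (Ioo a T) := by
  refine strictAntiOn_of_deriv_neg (convex_Ioo a T) (hf.continuousOn.mono Ioo_subset_Ioi_self)
    fun x hx => ?_
  rw [interior_Ioo] at hx
  exact hT0 ▸ hf' hx.1 hT hx.2

lemma strictMonoOn_Ioi_of_strictMonoOn_deriv (hf : DifferentiableOn ℝ f (Ioi a))
    (hf' : StrictMonoOn (deriv f) (Ioi a)) (hT : a < T) (hT0 : deriv f T = 0) :
    StrictMonoOn f (Ioi T) := by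
  refine strictMonoOn_of_deriv_pos (convex_Ioi T) (hf.continuousOn.mono (Ioi_subset_Ioi hT.le))
    fun x hx => ?_
  rw [interior_Ioi] at hx
  exact hT0 ▸ hf' hT (hT.trans hx) hx

end Calculus

noncomputable def energy (c K P t : ℝ) : ℝ := c * t * (exp (K / t) - 1) + t * P

noncomputable def energyDeriv (c K P t : ℝ) : ℝ := c * (exp (K / t) * (1 - K / t) - 1) + P

section Energy

variable {c K P t : ℝ}

lemma hasDerivAt_energy (ht : t ≠ 0) : HasDerivAt (energy c K P) (energyDeriv c K P t) t := by
  have hdiv : HasDerivAt (fun s => K / s) (K * -(t ^ 2)⁻¹) t := by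
    simpa [div_eq_mul_inv] using (hasDerivAt_inv ht).const_mul K
  have h : HasDerivAt (fun s => c * s * (exp (K / s) - 1) + s * P) _ t :=
    (((hasDerivAt_id' t).const_mul c).mul (hdiv.exp.sub_const 1)).add
      ((hasDerivAt_id' t).mul_const P)
  refine h.congr_deriv ?_
  rw [energyDeriv]
  field_simp
  ring

lemma deriv_energy (ht : t ≠ 0) : deriv (energy c K P) t = energyDeriv c K P t :=
  (hasDerivAt_energy ht).deriv

lemma differentiableOn_energy : DifferentiableOn ℝ (energy c K P) (Ioi 0) :=
  fun _ ht => (hasDerivAt_energy (ne_of_gt ht)).differentiableAt.differentiableWithinAt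

lemma strictMonoOn_deriv_energy (hc : 0 < c) (hK : 0 < K) :
    StrictMonoOn (deriv (energy c K P)) (Ioi 0) := by
  intro s hs t ht hst
  rw [deriv_energy (ne_of_gt hs), deriv_energy (ne_of_gt ht), energyDeriv, energyDeriv]
  have hKst : K / t < K / s := div_lt_div_of_pos_left hK hs hst
  have hh := strictAntiOn_exp_mul_one_sub (mem_Ici.2 (div_pos hK ht).le)
    (mem_Ici.2 (div_pos hK hs).le) hKst
  nlinarith

lemma strictConvexOn_energy (hc : 0 < c) (hK : 0 < K) :
    StrictConvexOn ℝ (Ioi 0) (energy c K P) :=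
  StrictMonoOn.strictConvexOn_of_deriv (convex_Ioi 0) differentiableOn_energy.continuousOn
    (by rw [interior_Ioi]; exact strictMonoOn_deriv_energy hc hK)

lemma strictAntiOn_energy_zero (hc : 0 < c) (hK : 0 < K) :
    StrictAntiOn (energy c K 0) (Ioi 0) := by
  refine strictAntiOn_of_deriv_neg (convex_Ioi 0) differentiableOn_energy.continuousOn
    fun t ht => ?_
  rw [interior_Ioi, mem_Ioi] at ht
  rw [deriv_energy ht.ne', energyDeriv, add_zero]
  exact mul_neg_of_pos_of_neg hc (sub_neg.2 (exp_mul_one_sub_lt_one (div_pos hK ht)))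

lemma exists_deriv_energy_eq_zero (hc : 0 < c) (hK : 0 < K) (hP : 0 < P) :
    ∃ T, 0 < T ∧ deriv (energy c K P) T = 0 := by
  obtain ⟨u, hu, hu_eq⟩ := exists_pos_exp_mul_one_sub_eq (sub_lt_self 1 (div_pos hP hc))
  refine ⟨K / u, div_pos hK hu, ?_⟩
  rw [deriv_energy (div_pos hK hu).ne', energyDeriv, div_div_cancel₀ hK.ne', hu_eq]
  field_simp
  ring

end Energy

theorem stmt_13_general (g η D B PC : ℝ)
    (hg : 0 < g) (hη0 : 0 < η) (hD : 0 < D) (hB : 0 < B)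
    (E : ℝ → ℝ)
    (hE : ∀ t : ℝ, E t = t / (g * η) * ((2 : ℝ) ^ (D / (B * t)) - 1) + t * PC) :
    ConvexOn ℝ (Set.Ioi (0 : ℝ)) E ∧
    (PC = 0 → StrictAntiOn E (Set.Ioi (0 : ℝ))) ∧
    (0 < PC → ∃ T : ℝ, 0 < T ∧ deriv E T = 0 ∧
      (∀ T' : ℝ, 0 < T' → deriv E T' = 0 → T' = T) ∧
      StrictAntiOn E (Set.Ioo 0 T) ∧ StrictMonoOn E (Set.Ioi T)) := by
  have hc : 0 < (g * η)⁻¹ := by positivity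
  have hK : 0 < D / B * log 2 := by positivity
  obtain rfl : E = energy (g * η)⁻¹ (D / B * log 2) PC := by
    funext t
    rw [hE, energy, rpow_def_of_pos two_pos, ← div_div]
    ring_nf
  refine ⟨(strictConvexOn_energy hc hK).convexOn, ?_, fun hP => ?_⟩
  · rintro rfl
    exact strictAntiOn_energy_zero hc hK
  obtain ⟨T, hT, hT0⟩ := exists_deriv_energy_eq_zero hc hK hP
  have hmono := strictMonoOn_deriv_energy hc hK (P := PC)
  refine ⟨T, hT, hT0, fun T' hT' hT'0 => hmono.injOn hT' hT (hT'0.trans hT0.symm), ?_, ?_⟩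
  · exact strictAntiOn_Ioo_of_strictMonoOn_deriv differentiableOn_energy hmono hT hT0
  · exact strictMonoOn_Ioi_of_strictMonoOn_deriv differentiableOn_energy hmono hT hT0

/-- Theorem 5 of the paper: the TDMA per-device energy
`E(t) = (t/(g·η))·(2^{D/(B·t)} − 1) + t·P^C` is convex on `(0, ∞)`; if `P^C = 0` it is
strictly decreasing on `(0, ∞)`; if `P^C > 0` there is a unique `T* > 0` where the
derivative of `E` vanishes, and `E` is strictly decreasing on `(0, T*)` and strictly
increasing on `(T*, ∞)`. -/
theorem stmt_13 (g η D B PC : ℝ)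
    (hg : 0 < g) (hη0 : 0 < η) (hη1 : η ≤ 1) (hD : 0 < D) (hB : 0 < B) (hPC : 0 ≤ PC)
    (E : ℝ → ℝ)
    (hE : ∀ t : ℝ, E t = t / (g * η) * ((2 : ℝ) ^ (D / (B * t)) - 1) + t * PC) :
    ConvexOn ℝ (Set.Ioi (0 : ℝ)) E ∧
    (PC = 0 → StrictAntiOn E (Set.Ioi (0 : ℝ))) ∧
    (0 < PC → ∃ T : ℝ, 0 < T ∧ deriv E T = 0 ∧
      (∀ T' : ℝ, 0 < T' → deriv E T' = 0 → T' = T) ∧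
      StrictAntiOn E (Set.Ioo 0 T) ∧ StrictMonoOn E (Set.Ioi T)) :=
  stmt_13_general g η D B PC hg hη0 hD hB E hE
end
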